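/- Let P and P̃ be non-degenerate k×k real matrices with P̃ᵀP̃ = PᵀP + E. Then there exists a linear isometry Φ : ℝ^k → ℝ^k such that ‖P̃P⁻¹ − Φ‖ ≤ σ_1(E) / σ_k(P)², where σ_1 denotes the largest and σ_k the smallest singular value, and ‖·‖ the operator norm. -/

import Mathlib

/-!
Put `A = P̃ P⁻¹`, so that `Aᵀ A - 1 = P⁻ᵀ E P⁻¹`, and let `Φ` be the orthogonal factor of the
polar decomposition `A = Φ S`, `S = √(Aᵀ A)`. Then `‖A - Φ‖ = ‖S - 1‖`, and since `S + 1 ≥ 1`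
does not shrink vectors, `‖S - 1‖ ≤ ‖(S + 1)(S - 1)‖ = ‖Aᵀ A - 1‖ ≤ ‖E‖ ‖P⁻¹‖²`, while
`σ_k(P) = ‖P⁻¹‖⁻¹`.
-/

noncomputable section

open Metric Matrix

/-- The largest singular value (operator norm w.r.t. Euclidean norms) of a matrix. -/
def largestSing {m k : ℕ} (P : Matrix (Fin m) (Fin k) ℝ) : ℝ :=
  sSup { r : ℝ | ∃ x : EuclideanSpace ℝ (Fin k), ‖x‖ = 1 ∧
    r = ‖(EuclideanSpace.equiv (Fin m) ℝ).symm (P.mulVec (EuclideanSpace.equiv (Fin k) ℝ x))‖ }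

/-- The smallest singular value of a matrix. -/
def smallestSing {m k : ℕ} (P : Matrix (Fin m) (Fin k) ℝ) : ℝ :=
  sInf { r : ℝ | ∃ x : EuclideanSpace ℝ (Fin k), ‖x‖ = 1 ∧
    r = ‖(EuclideanSpace.equiv (Fin m) ℝ).symm (P.mulVec (EuclideanSpace.equiv (Fin k) ℝ x))‖ }

lemma LinearMap.IsPositive.norm_le_norm_add_self {𝕜 E : Type*} [RCLike 𝕜]
    [NormedAddCommGroup E] [InnerProductSpace 𝕜 E] {T : E →ₗ[𝕜] E} (hT : T.IsPositive) (x : E) :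
    ‖x‖ ≤ ‖T x + x‖ := by
  refine (sq_le_sq₀ (norm_nonneg _) (norm_nonneg _)).mp ?_
  rw [norm_add_sq (𝕜 := 𝕜)]
  nlinarith [hT.re_inner_nonneg_left x, sq_nonneg ‖T x‖]

namespace Matrix

open scoped Matrix.Norms.L2Operator MatrixOrder ComplexOrder

variable {𝕜 n : Type*} [RCLike 𝕜] [Fintype n] [DecidableEq n]

lemma l2_opNorm_sub_one_le_of_posSemidef {S : Matrix n n 𝕜} (hS : S.PosSemidef) :
    ‖S - 1‖ ≤ ‖S * S - 1‖ := by
  rw [cstar_norm_def]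
  refine ContinuousLinearMap.opNorm_le_bound _ (norm_nonneg _) fun x => ?_
  set T := toEuclideanCLM (𝕜 := 𝕜) S
  set y := toEuclideanCLM (𝕜 := 𝕜) (S - 1) x
  have hT : (T : EuclideanSpace 𝕜 n →ₗ[𝕜] _).IsPositive := isPositive_toEuclideanLin_iff.mpr hS
  have hy : toEuclideanCLM (𝕜 := 𝕜) (S * S - 1) x = T y + y := by
    rw [show S * S - 1 = (S + 1) * (S - 1) by noncomm_ring, map_mul, map_add, map_one]
    rfl
  calc ‖y‖ ≤ ‖T y + y‖ := hT.norm_le_norm_add_self y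
    _ = ‖toEuclideanCLM (𝕜 := 𝕜) (S * S - 1) x‖ := by rw [hy]
    _ ≤ ‖S * S - 1‖ * ‖x‖ := (toEuclideanCLM (𝕜 := 𝕜) (S * S - 1)).le_opNorm x

theorem exists_mem_unitaryGroup_l2_opNorm_sub_le {A : Matrix n n 𝕜} (hA : IsUnit A) :
    ∃ Φ ∈ unitaryGroup n 𝕜, ‖A - Φ‖ ≤ ‖Aᴴ * A - 1‖ := by
  set S := CFC.sqrt (Aᴴ * A)
  have hSS : S * S = Aᴴ * A := CFC.sqrt_mul_sqrt_self _ (posSemidef_conjTranspose_mul_self A).nonneg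
  have hS : S.PosSemidef := nonneg_iff_posSemidef.mp (CFC.sqrt_nonneg _)
  have hSu : IsUnit S.det := (isUnit_iff_isUnit_det S).mp <|
    isUnit_of_mul_isUnit_left (hSS ▸ hA.star.mul hA)
  have hΦ : A * S⁻¹ ∈ unitaryGroup n 𝕜 := by
    rw [mem_unitaryGroup_iff', star_eq_conjTranspose, conjTranspose_mul,
      conjTranspose_nonsing_inv, hS.1]
    calc S⁻¹ * Aᴴ * (A * S⁻¹) = S⁻¹ * (Aᴴ * A) * S⁻¹ := by noncomm_ring
      _ = (S⁻¹ * S) * (S * S⁻¹) := by rw [← hSS]; noncomm_ring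
      _ = 1 := by rw [nonsing_inv_mul _ hSu, mul_nonsing_inv _ hSu, Matrix.one_mul]
  refine ⟨A * S⁻¹, hΦ, ?_⟩
  calc ‖A - A * S⁻¹‖ = ‖A * S⁻¹ * (S - 1)‖ := by
        rw [Matrix.mul_sub, Matrix.mul_assoc, nonsing_inv_mul _ hSu, Matrix.mul_one, Matrix.mul_one]
    _ = ‖S - 1‖ := CStarRing.norm_coe_unitary_mul ⟨_, hΦ⟩ _
    _ ≤ ‖Aᴴ * A - 1‖ := hSS ▸ l2_opNorm_sub_one_le_of_posSemidef hS

end Matrix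

section SingularValues

open scoped Matrix.Norms.L2Operator

variable {m k : ℕ}

lemma largestSing_eq_l2_opNorm (M : Matrix (Fin m) (Fin k) ℝ) : largestSing M = ‖M‖ := by
  rw [l2_opNorm_def, ← ContinuousLinearMap.sSup_sphere_eq_norm, largestSing]
  congr 1
  ext r
  simp only [Set.mem_ofPred_eq, Set.mem_image, mem_sphere_zero_iff_norm]
  exact exists_congr fun x => and_congr_right fun _ => eq_comm

lemma smallestSing_mul_norm_le (P : Matrix (Fin m) (Fin k) ℝ) (x : EuclideanSpace ℝ (Fin k)) :
    smallestSing P * ‖x‖ ≤ ‖toEuclideanLin P x‖ := by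
  rcases eq_or_ne x 0 with rfl | hx
  · simp
  have hσ : smallestSing P ≤ ‖toEuclideanLin P ((‖x‖⁻¹ : ℝ) • x)‖ :=
    csInf_le ⟨0, by rintro r ⟨y, -, rfl⟩; exact norm_nonneg _⟩ ⟨_, norm_smul_inv_norm hx, rfl⟩
  rwa [map_smul, norm_smul, norm_inv, norm_norm, inv_mul_eq_div,
    le_div_iff₀ (norm_pos_iff.mpr hx)] at hσ

lemma smallestSing_eq_inv_l2_opNorm_inv {P : Matrix (Fin k) (Fin k) ℝ} (hP : IsUnit P) :
    smallestSing P = ‖P⁻¹‖⁻¹ := by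
  rcases isEmpty_or_nonempty (Fin k) with _ | _
  · -- for `k = 0` both sides are junk: `sInf ∅ = 0` and `0⁻¹ = 0`
    have hsphere (x : EuclideanSpace ℝ (Fin k)) : ‖x‖ ≠ 1 := by simp [Subsingleton.elim x 0]
    simp [smallestSing, hsphere, Subsingleton.elim P⁻¹ 0]
  have hPd := (isUnit_iff_isUnit_det P).mp hP
  set T := toEuclideanCLM (𝕜 := ℝ) P
  set Tinv := toEuclideanCLM (𝕜 := ℝ) P⁻¹
  have hTTinv (y : EuclideanSpace ℝ (Fin k)) : T (Tinv y) = y := by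
    change (T * Tinv) y = y
    rw [← map_mul, mul_nonsing_inv _ hPd, map_one]
    rfl
  have hTinvT (x : EuclideanSpace ℝ (Fin k)) : Tinv (T x) = x := by
    change (Tinv * T) x = x
    rw [← map_mul, nonsing_inv_mul _ hPd, map_one]
    rfl
  have hunit (x : EuclideanSpace ℝ (Fin k)) (hx : ‖x‖ = 1) : 1 ≤ ‖P⁻¹‖ * ‖T x‖ := by
    have := Tinv.le_opNorm (T x)
    rwa [hTinvT, hx] at this
  obtain ⟨x₀, hx₀⟩ : ∃ x : EuclideanSpace ℝ (Fin k), ‖x‖ = 1 := exists_norm_eq _ zero_le_one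
  have hinv_pos : 0 < ‖P⁻¹‖ := norm_pos_iff.mpr (isUnit_nonsing_inv_iff.mpr hP).ne_zero
  have hlow : ‖P⁻¹‖⁻¹ ≤ smallestSing P := by
    refine le_csInf ⟨_, x₀, hx₀, rfl⟩ ?_
    rintro r ⟨x, hx, rfl⟩
    exact (inv_le_iff_one_le_mul₀' hinv_pos).mpr (hunit x hx)
  have hpos : 0 < smallestSing P := (inv_pos.mpr hinv_pos).trans_le hlow
  have hup : ‖P⁻¹‖ ≤ (smallestSing P)⁻¹ := by
    refine Tinv.opNorm_le_bound (inv_nonneg.mpr hpos.le) fun y => ?_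
    rw [inv_mul_eq_div, le_div_iff₀' hpos]
    exact (smallestSing_mul_norm_le P (Tinv y)).trans_eq (congrArg norm (hTTinv y))
  exact le_antisymm ((le_inv_comm₀ hpos hinv_pos).mpr hup) hlow

end SingularValues

open scoped Matrix.Norms.L2Operator in
/-- **Linear distortion bound.**  If `P̃ᵀP̃ = PᵀP + E` with `P, P̃` non-degenerate,
there is a linear isometry `Φ` with `‖P̃P⁻¹ − Φ‖ ≤ σ₁(E)/σ_k(P)²`. -/
theorem linear_distortion_bound {k : ℕ} (P Pt : Matrix (Fin k) (Fin k) ℝ)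
    (hP : IsUnit P) (hPt : IsUnit Pt)
    (E : Matrix (Fin k) (Fin k) ℝ) (hE : Ptᵀ * Pt = Pᵀ * P + E) :
    ∃ Φ : Matrix (Fin k) (Fin k) ℝ, Φᵀ * Φ = 1 ∧
      largestSing (Pt * P⁻¹ - Φ) ≤ largestSing E / smallestSing P ^ 2 := by
  have hPd := (isUnit_iff_isUnit_det P).mp hP
  have hE' : Ptᴴ * Pt = Pᴴ * P + E := by
    simpa only [conjTranspose_eq_transpose_of_trivial] using hE
  have hgram : (Pt * P⁻¹)ᴴ * (Pt * P⁻¹) - 1 = (P⁻¹)ᴴ * E * P⁻¹ := by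
    have hPP : (P⁻¹)ᴴ * Pᴴ = 1 := by
      rw [← conjTranspose_mul, mul_nonsing_inv _ hPd, conjTranspose_one]
    calc (Pt * P⁻¹)ᴴ * (Pt * P⁻¹) - 1 = (P⁻¹)ᴴ * (Ptᴴ * Pt) * P⁻¹ - 1 := by
          rw [conjTranspose_mul]; noncomm_ring
      _ = ((P⁻¹)ᴴ * Pᴴ) * (P * P⁻¹) + (P⁻¹)ᴴ * E * P⁻¹ - 1 := by rw [hE']; noncomm_ring
      _ = (P⁻¹)ᴴ * E * P⁻¹ := by rw [hPP, mul_nonsing_inv _ hPd]; noncomm_ring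
  obtain ⟨Φ, hΦ, hdist⟩ :=
    exists_mem_unitaryGroup_l2_opNorm_sub_le (hPt.mul (isUnit_nonsing_inv_iff.mpr hP))
  refine ⟨Φ, conjTranspose_eq_transpose_of_trivial Φ ▸ mem_unitaryGroup_iff'.mp hΦ, ?_⟩
  rw [largestSing_eq_l2_opNorm, largestSing_eq_l2_opNorm, smallestSing_eq_inv_l2_opNorm_inv hP,
    inv_pow, div_inv_eq_mul]
  calc ‖Pt * P⁻¹ - Φ‖ ≤ ‖(P⁻¹)ᴴ * E * P⁻¹‖ := hgram ▸ hdist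
    _ ≤ ‖(P⁻¹)ᴴ‖ * ‖E‖ * ‖P⁻¹‖ := (l2_opNorm_mul _ _).trans (by gcongr; exact l2_opNorm_mul _ _)
    _ = ‖E‖ * ‖P⁻¹‖ ^ 2 := by rw [l2_opNorm_conjTranspose]; ring
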